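/- At each of the two points (π/2, π/2, π/2) and (−π/2, π/2, π/2), the gradient of L₁ vanishes, L₁ takes the value 1/4, and the Hessian matrix of L₁ (the 3×3 symmetric matrix of second partial derivatives in (Ω,β₁,β₂)) has both a strictly positive and a strictly negative eigenvalue; hence these points are saddle points of L₁. -/

import Mathlib

/-!
By `sin² (β₁/2) = (1 - cos β₁)/2` and the double-angle formulas, `L₁` is a trigonometric
polynomial in `(Ω, β₁, β₂)`, so its partial derivatives are explicit. At `Ω = ±π/2`,
`β₁ = β₂ = π/2` they all vanish and the Hessian is `!![0, 0, a; 0, 1/2, 0; a, 0, 1/2]` with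
`a = ∓1/2`. The coordinate vector of `β₁` is an eigenvector for `1/2`, while the block in the
`(Ω, β₂)`-plane has determinant `-a² < 0` and therefore a negative eigenvalue.
-/

open Matrix

/-- The kinematic landscape function `L₁(Ω,β₁,β₂)`. -/
noncomputable def L1 (Ω β₁ β₂ : ℝ) : ℝ :=
  (1/8) * Real.sin β₂ ^ 2 * (3 + Real.cos (2*β₁))
  + (1/2) * Real.sin β₁ ^ 2 * Real.cos β₂ ^ 2
  - (1/2) * Real.cos Ω * Real.sin β₁ * Real.sin (β₁/2) ^ 2 * Real.sin (2*β₂)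

/-- `L₁` as a function on `ℝ³`. -/
noncomputable def L1v (v : Fin 3 → ℝ) : ℝ := L1 (v 0) (v 1) (v 2)

/-- Hessian matrix of second partial derivatives of `f : ℝⁿ → ℝ` at `p`. -/
noncomputable def hessian {n : ℕ} (f : (Fin n → ℝ) → ℝ) (p : Fin n → ℝ) :
    Matrix (Fin n) (Fin n) ℝ :=
  Matrix.of fun i j => fderiv ℝ (fun y => fderiv ℝ f y (Pi.single j 1)) p (Pi.single i 1)

open Real Function

section PartialDerivatives

variable {ι F : Type*} [Fintype ι] [DecidableEq ι] [NormedAddCommGroup F] [NormedSpace ℝ F]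

theorem fderiv_apply_single_eq_deriv_update {f : (ι → ℝ) → F} {x : ι → ℝ}
    (hf : DifferentiableAt ℝ f x) (i : ι) :
    fderiv ℝ f x (Pi.single i 1) = deriv (fun t => f (update x i t)) (x i) := by
  have hf' : HasFDerivAt f (fderiv ℝ f x) (update x i (x i)) := by
    rw [update_eq_self]; exact hf.hasFDerivAt
  exact (hf'.comp_hasDerivAt _ (hasDerivAt_update x i (x i))).deriv.symm

theorem ContinuousLinearMap.eq_zero_of_apply_single {f : (ι → ℝ) →L[ℝ] F}
    (h : ∀ i, f (Pi.single i 1) = 0) : f = 0 := by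
  refine ContinuousLinearMap.coe_injective (LinearMap.pi_ext fun i x => ?_)
  have hsingle : Pi.single i x = x • Pi.single i (1 : ℝ) := by
    rw [← Pi.single_smul', smul_eq_mul, mul_one]
  simp [hsingle, h]

theorem hessian_apply_eq_deriv_update {n : ℕ} {f : (Fin n → ℝ) → ℝ} (hf : ContDiff ℝ 2 f)
    (p : Fin n → ℝ) (i j : Fin n) :
    hessian f p i j = deriv (fun t => fderiv ℝ f (update p i t) (Pi.single j 1)) (p i) := by
  have hdiff : Differentiable ℝ (fun y => fderiv ℝ f y (Pi.single j 1)) :=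
    ((hf.fderiv_right (m := 1) (by norm_num)).differentiable (by norm_num)).clm_apply
      (differentiable_const _)
  exact fderiv_apply_single_eq_deriv_update hdiff.differentiableAt i

end PartialDerivatives

theorem L1_eq_trigPolynomial (Ω β₁ β₂ : ℝ) :
    L1 Ω β₁ β₂ = 5/16 - cos (2*β₁) / 16 - cos (2*β₂) / 16 - 3/16 * cos (2*β₁) * cos (2*β₂)
      - cos Ω * sin β₁ * sin (2*β₂) / 4 + cos Ω * sin (2*β₁) * sin (2*β₂) / 8 := by
  have hhalf : sin (β₁/2) ^ 2 = (1 - cos β₁) / 2 := by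
    have := cos_sq (β₁/2); rw [show 2 * (β₁/2) = β₁ by ring] at this
    linarith [sin_sq_add_cos_sq (β₁/2)]
  rw [L1, hhalf, sin_two_mul β₁, cos_two_mul β₁, cos_two_mul β₂, sin_two_mul β₂]
  nlinarith [sin_sq_add_cos_sq β₁, sin_sq_add_cos_sq β₂]

theorem contDiff_L1v : ContDiff ℝ 2 L1v := by
  unfold L1v L1; fun_prop

noncomputable def gradL1 (Ω β₁ β₂ : ℝ) : Fin 3 → ℝ :=
  ![sin Ω * sin β₁ * sin (2*β₂) / 4 - sin Ω * sin (2*β₁) * sin (2*β₂) / 8,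
    sin (2*β₁) / 8 + 3/8 * sin (2*β₁) * cos (2*β₂) - cos Ω * cos β₁ * sin (2*β₂) / 4
      + cos Ω * cos (2*β₁) * sin (2*β₂) / 4,
    sin (2*β₂) / 8 + 3/8 * cos (2*β₁) * sin (2*β₂) - cos Ω * sin β₁ * cos (2*β₂) / 2
      + cos Ω * sin (2*β₁) * cos (2*β₂) / 4]

theorem fderiv_L1v_apply_single (y : Fin 3 → ℝ) (j : Fin 3) :
    fderiv ℝ L1v y (Pi.single j 1) = gradL1 (y 0) (y 1) (y 2) j := by
  rw [fderiv_apply_single_eq_deriv_update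
    (contDiff_L1v.differentiable (by norm_num)).differentiableAt]
  fin_cases j <;>
    simp (disch := fun_prop) [L1v, L1_eq_trigPolynomial, gradL1, update_apply] <;> ring

theorem gradL1_eq_zero_of_cos_eq_zero {ω : ℝ} (hω : cos ω = 0) :
    gradL1 ω (π/2) (π/2) = 0 := by
  ext j; fin_cases j <;> simp [gradL1, hω, show 2 * (π / 2) = π by ring]

theorem L1_eq_one_fourth_of_cos_eq_zero {ω : ℝ} (hω : cos ω = 0) :
    L1 ω (π/2) (π/2) = 1/4 := by
  rw [L1_eq_trigPolynomial]; simp [hω, show 2 * (π / 2) = π by ring]; norm_num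

theorem hessian_L1v_of_cos_eq_zero {ω : ℝ} (hω : cos ω = 0) :
    hessian L1v ![ω, π/2, π/2] = !![0, 0, -sin ω / 2; 0, 1/2, 0; -sin ω / 2, 0, 1/2] := by
  ext i j
  rw [hessian_apply_eq_deriv_update contDiff_L1v]
  simp only [fderiv_L1v_apply_single]
  fin_cases i <;> fin_cases j <;>
    simp (disch := fun_prop) [gradL1, update_apply, hω, show 2 * (π / 2) = π by ring] <;> ring

theorem exists_pos_eigenvalue_of_pos_diag (a : ℝ) {b : ℝ} (hb : 0 < b) :
    ∃ (c : ℝ) (v : Fin 3 → ℝ), 0 < c ∧ v ≠ 0 ∧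
      (!![0, 0, a; 0, b, 0; a, 0, b] : Matrix (Fin 3) (Fin 3) ℝ) *ᵥ v = c • v := by
  refine ⟨b, ![0, 1, 0], hb, fun h => by simpa using congrFun h 1, ?_⟩
  ext i; fin_cases i <;> simp [mulVec, dotProduct, Fin.sum_univ_three]

theorem exists_neg_eigenvalue_of_ne_zero {a : ℝ} (ha : a ≠ 0) (b : ℝ) :
    ∃ (c : ℝ) (v : Fin 3 → ℝ), c < 0 ∧ v ≠ 0 ∧
      (!![0, 0, a; 0, b, 0; a, 0, b] : Matrix (Fin 3) (Fin 3) ℝ) *ᵥ v = c • v := by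
  set s := √(b ^ 2 + 4 * a ^ 2)
  have hs : s ^ 2 = b ^ 2 + 4 * a ^ 2 := sq_sqrt (by positivity)
  have hb_lt : b < s := by
    nlinarith [sqrt_nonneg (b ^ 2 + 4 * a ^ 2), sq_pos_of_ne_zero ha]
  -- the negative root of `c² - b c - a²`, the characteristic polynomial of `!![0, a; a, b]`
  set c := (b - s) / 2
  have hc_neg : c < 0 := by simp only [c]; linarith
  have hc : c * c = a * a + b * c := by simp only [c]; linear_combination hs / 4
  refine ⟨c, ![a, 0, c], hc_neg, fun h => hc_neg.ne (by simpa using congrFun h 2), ?_⟩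
  ext i; fin_cases i <;> simp [mulVec, dotProduct, Fin.sum_univ_three, hc, mul_comm]

open Real in
/-- at the points (±π/2, π/2, π/2) the gradient of L₁ vanishes, L₁ = 1/4, and the Hessian has both a strictly positive and a strictly negative eigenvalue: these are saddle points. -/
theorem stmt6 (p : Fin 3 → ℝ)
    (hp : p = ![π/2, π/2, π/2] ∨ p = ![-(π/2), π/2, π/2]) :
    -- the gradient of L₁ vanishes at p
    fderiv ℝ L1v p = 0
    -- L₁ takes the value 1/4 at p
    ∧ L1v p = 1/4
    -- the Hessian has a strictly positive eigenvalue
    ∧ (∃ (c : ℝ) (v : Fin 3 → ℝ), 0 < c ∧ v ≠ 0 ∧ (hessian L1v p).mulVec v = c • v)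
    -- and a strictly negative eigenvalue (hence p is a saddle point)
    ∧ (∃ (c : ℝ) (v : Fin 3 → ℝ), c < 0 ∧ v ≠ 0 ∧ (hessian L1v p).mulVec v = c • v) := by
  obtain ⟨ω, hω, rfl⟩ : ∃ ω, cos ω = 0 ∧ p = ![ω, π/2, π/2] := by
    rcases hp with rfl | rfl
    exacts [⟨_, cos_pi_div_two, rfl⟩, ⟨_, by simp, rfl⟩]
  have ha : -sin ω / 2 ≠ 0 := fun h => by nlinarith [sin_sq_add_cos_sq ω]
  refine ⟨ContinuousLinearMap.eq_zero_of_apply_single fun j => ?_,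
    L1_eq_one_fourth_of_cos_eq_zero hω, ?_, ?_⟩
  · rw [fderiv_L1v_apply_single]
    simp [gradL1_eq_zero_of_cos_eq_zero hω]
  · rw [hessian_L1v_of_cos_eq_zero hω]; exact exists_pos_eigenvalue_of_pos_diag _ one_half_pos
  · rw [hessian_L1v_of_cos_eq_zero hω]; exact exists_neg_eigenvalue_of_ne_zero ha _
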